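/- arXiv:2602.11555 — 2 statements merged into one kernel-verified Lean document; each statement's English description precedes it below -/
import Mathlib

section
/- Conservation of the mass-weighted mean velocity: let (x, v) be a solution of the ICS system on [0,∞) with sup_i(‖x_i(0)‖ + ‖v_i(0)‖) < ∞, and define v_c(t) = ∑_{i=1}^∞ m_i v_i(t). Then v_c is constant along the dynamics: v_c(t) = v_c(0) for all t ≥ 0. -/
open Filter MeasureTheory
open scoped Topology

noncomputable section

/-- Componentwise sign-power map `Γ`. -/
def Gam (d : ℕ) (α : ℝ) (v : EuclideanSpace ℝ (Fin d)) : EuclideanSpace ℝ (Fin d) :=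
  WithLp.toLp 2 (fun k => Real.sign (v k) * |v k| ^ α)

/-- Right-hand side of the ICS velocity equation. -/
def icsRHS (d : ℕ) (κ α : ℝ) (m : ℕ → ℝ) (ψ : ℝ → ℝ)
    (x v : ℕ → ℝ → EuclideanSpace ℝ (Fin d)) (i : ℕ) (t : ℝ) :
    EuclideanSpace ℝ (Fin d) :=
  κ • ∑' j, (m j * ψ ‖x j t - x i t‖) • Gam d α (v j t - v i t)

/-- Solution of the infinite Cucker–Smale system on the set `s`, satisfying the ODE on `sInt`:
uniform boundedness on compact subsets, continuity, `ẋᵢ = vᵢ`, and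
`v̇ᵢ = κ ∑ⱼ mⱼ ψ(‖xⱼ-xᵢ‖) Γ(vⱼ-vᵢ)` with the series converging absolutely. -/
def IsICSSolOn (d : ℕ) (κ α : ℝ) (m : ℕ → ℝ) (ψ : ℝ → ℝ)
    (x v : ℕ → ℝ → EuclideanSpace ℝ (Fin d)) (s sInt : Set ℝ) : Prop :=
  (∀ K : Set ℝ, K ⊆ s → IsCompact K → ∃ C : ℝ, ∀ i, ∀ t ∈ K, ‖x i t‖ + ‖v i t‖ ≤ C) ∧
  (∀ i, ContinuousOn (x i) s) ∧
  (∀ i, ContinuousOn (v i) s) ∧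
  (∀ i, ∀ t ∈ sInt,
      HasDerivAt (x i) (v i t) t ∧
      Summable (fun j => ‖(m j * ψ ‖x j t - x i t‖) • Gam d α (v j t - v i t)‖) ∧
      HasDerivAt (v i) (icsRHS d κ α m ψ x v i t) t)

/-- Upper right Dini derivative `D⁺f(t) = limsup_{h→0⁺} (f(t+h)-f(t))/h`. -/
def diniUR (f : ℝ → ℝ) (t : ℝ) : ℝ :=
  limsup (fun h => (f (t + h) - f t) / h) (𝓝[>] (0 : ℝ))

/-- Lower right Dini derivative `D⁻f(t) = liminf_{h→0⁺} (f(t+h)-f(t))/h`. -/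
def diniLR (f : ℝ → ℝ) (t : ℝ) : ℝ :=
  liminf (fun h => (f (t + h) - f t) / h) (𝓝[>] (0 : ℝ))

/-- `M^(k)(t) = sup_i v_i^k(t)`. -/
def Msup (d : ℕ) (v : ℕ → ℝ → EuclideanSpace ℝ (Fin d)) (k : Fin d) (t : ℝ) : ℝ :=
  ⨆ i, v i t k

/-- `m^(k)(t) = inf_i v_i^k(t)`. -/
def minf (d : ℕ) (v : ℕ → ℝ → EuclideanSpace ℝ (Fin d)) (k : Fin d) (t : ℝ) : ℝ :=
  ⨅ i, v i t k

/-- Component velocity diameter `D_v^(k)(t) = M^(k)(t) - m^(k)(t)`. -/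
def Dv (d : ℕ) (v : ℕ → ℝ → EuclideanSpace ℝ (Fin d)) (k : Fin d) (t : ℝ) : ℝ :=
  Msup d v k t - minf d v k t

/-- Position diameter `D_x(t) = sup_{i,j} ‖x_i(t) - x_j(t)‖`. -/
def Dx (d : ℕ) (x : ℕ → ℝ → EuclideanSpace ℝ (Fin d)) (t : ℝ) : ℝ :=
  ⨆ p : ℕ × ℕ, ‖x p.1 t - x p.2 t‖

/-- Weighted `ℓ²_m` seminorm. -/
def wnorm (d : ℕ) (m : ℕ → ℝ) (u : ℕ → EuclideanSpace ℝ (Fin d)) : ℝ :=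
  Real.sqrt (∑' i, m i * ‖u i‖ ^ 2)

/-!
Differentiating `v_c = ∑ᵢ mᵢ vᵢ` termwise, which is legitimate because the velocities and the
right-hand sides are uniformly bounded on compact time intervals, gives
`v̇_c = κ ∑ᵢ ∑ⱼ mᵢ mⱼ ψ(‖xⱼ - xᵢ‖) Γ(vⱼ - vᵢ)`. The summand is antisymmetric in `(i, j)` since `Γ`
is odd, and the double series converges absolutely, so exchanging the order of summation shows
that it equals its own negative. Hence `v̇_c = 0` for `t > 0`, and `v_c` is constant on `[0, ∞)` by
continuity at `0`.
-/

open Set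

lemma eq_of_continuousOn_Icc_of_hasDerivAt_zero {E : Type*} [NormedAddCommGroup E]
    [NormedSpace ℝ E] {f : ℝ → E} {a b : ℝ} (hab : a ≤ b) (hcont : ContinuousOn f (Icc a b))
    (hderiv : ∀ y ∈ Ioo a b, HasDerivAt f 0 y) : f b = f a := by
  refine constant_of_has_deriv_right_zero hcont (fun y hy => ?_) b ⟨hab, le_rfl⟩
  rcases hy.1.eq_or_lt with rfl | hay
  · have hdiff : DifferentiableOn ℝ f (Ioo a b) := fun z hz =>
      (hderiv z hz).differentiableAt.differentiableWithinAt
    refine hasDerivWithinAt_Ici_of_tendsto_deriv hdiff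
      ((hcont a ⟨le_rfl, hab⟩).mono Ioo_subset_Icc_self) (Ioo_mem_nhdsGT hy.2) ?_
    refine tendsto_const_nhds.congr' ?_
    filter_upwards [Ioo_mem_nhdsGT hy.2] with z hz
    exact (hderiv z hz).deriv.symm
  · exact (hderiv y ⟨hay, hy.2⟩).hasDerivWithinAt

section WeightedSums

variable {ι E : Type*} [NormedAddCommGroup E] [NormedSpace ℝ E] {m : ι → ℝ} {B : ℝ}

lemma norm_smul_le_of_norm_le (hm0 : ∀ i, 0 ≤ m i) {F : ι → E} (hF : ∀ i, ‖F i‖ ≤ B) (i : ι) :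
    ‖m i • F i‖ ≤ m i * B := by
  rw [norm_smul, Real.norm_of_nonneg (hm0 i)]
  exact mul_le_mul_of_nonneg_left (hF i) (hm0 i)

lemma norm_tsum_smul_le (hm0 : ∀ i, 0 ≤ m i) (hm : Summable m) {F : ι → E}
    (hF : ∀ i, ‖F i‖ ≤ B) : ‖∑' i, m i • F i‖ ≤ (∑' i, m i) * B :=
  tsum_of_norm_bounded (hm.hasSum.mul_right B) (norm_smul_le_of_norm_le hm0 hF)

variable [CompleteSpace E]

lemma tsum_smul_tsum_smul_eq_zero_of_antisymm (hm0 : ∀ i, 0 ≤ m i) (hm : Summable m)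
    {F : ι → ι → E} (hF : ∀ i j, ‖F i j‖ ≤ B) (hanti : ∀ i j, F j i = -F i j) :
    ∑' i, m i • ∑' j, m j • F i j = 0 := by
  set G : ι → ι → E := fun i j => (m i * m j) • F i j
  have hG : Summable (Function.uncurry G) := by
    refine .of_norm_bounded ((hm.mul_of_nonneg hm hm0 hm0).mul_right B) fun p => ?_
    exact norm_smul_le_of_norm_le (fun p => mul_nonneg (hm0 p.1) (hm0 p.2)) (fun p => hF p.1 p.2) p
  have hsum : ∑' i, m i • ∑' j, m j • F i j = ∑' i, ∑' j, G i j := by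
    simp only [G, ← tsum_const_smul'', smul_smul]
  have hswap : ∑' i, ∑' j, G i j = -∑' i, ∑' j, G i j := by
    calc ∑' i, ∑' j, G i j = ∑' j, ∑' i, G i j := hG.tsum_comm.symm
      _ = ∑' j, ∑' i, -G j i := tsum_congr fun j => tsum_congr fun i => by
        simp only [G, hanti i j, mul_comm (m i), smul_neg, neg_neg]
      _ = -∑' i, ∑' j, G i j := by simp only [tsum_neg]
  have htwo : (2 : ℝ) • ∑' i, ∑' j, G i j = 0 := by
    rw [two_smul]
    nth_rewrite 1 [hswap]
    exact neg_add_cancel _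
  rw [hsum]
  exact (smul_eq_zero.mp htwo).resolve_left two_ne_zero

lemma tsum_smul_eq_of_tsum_smul_deriv_eq_zero (hm0 : ∀ i, 0 ≤ m i) (hm : Summable m)
    {f f' : ι → ℝ → E} {a b C K : ℝ} (hab : a ≤ b) (hcont : ∀ i, ContinuousOn (f i) (Icc a b))
    (hf : ∀ i, ∀ t ∈ Icc a b, ‖f i t‖ ≤ C)
    (hderiv : ∀ i, ∀ t ∈ Ioo a b, HasDerivAt (f i) (f' i t) t)
    (hf' : ∀ i, ∀ t ∈ Ioo a b, ‖f' i t‖ ≤ K) (hzero : ∀ t ∈ Ioo a b, ∑' i, m i • f' i t = 0) :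
    ∑' i, m i • f i b = ∑' i, m i • f i a := by
  refine eq_of_continuousOn_Icc_of_hasDerivAt_zero (f := fun t => ∑' i, m i • f i t) hab ?_
    fun y hy => ?_
  · exact continuousOn_tsum (fun i => (hcont i).const_smul (m i)) (hm.mul_right C)
      fun i t ht => norm_smul_le_of_norm_le hm0 (fun i => hf i t ht) i
  · rw [← hzero y hy]
    refine hasDerivAt_tsum_of_isPreconnected (hm.mul_right K) isOpen_Ioo isPreconnected_Ioo
      (fun i t ht => (hderiv i t ht).const_smul (m i))
      (fun i t ht => norm_smul_le_of_norm_le hm0 (fun i => hf' i t ht) i) hy ?_ hy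
    exact .of_norm_bounded (hm.mul_right C)
      (norm_smul_le_of_norm_le hm0 fun i => hf i y (Ioo_subset_Icc_self hy))

end WeightedSums

section CuckerSmale

variable {d : ℕ} {α : ℝ}

lemma Gam_neg (u : EuclideanSpace ℝ (Fin d)) : Gam d α (-u) = -Gam d α u := by
  ext k
  simp only [Gam, PiLp.toLp_apply, PiLp.neg_apply, Real.sign_neg, abs_neg, neg_mul]

lemma norm_Gam_le (hα : 0 ≤ α) (u : EuclideanSpace ℝ (Fin d)) :
    ‖Gam d α u‖ ≤ √d * ‖u‖ ^ α := by
  have hk : ∀ k, ‖Gam d α u k‖ ≤ ‖u‖ ^ α := fun k => by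
    have hsign : |Real.sign (u k)| ≤ 1 := by
      rcases Real.sign_apply_eq (u k) with h | h | h <;> simp [h]
    calc ‖Gam d α u k‖ = |Real.sign (u k)| * |u k| ^ α := by
          simp only [Gam, PiLp.toLp_apply, Real.norm_eq_abs, abs_mul,
            abs_of_nonneg (Real.rpow_nonneg (abs_nonneg (u k)) α)]
      _ ≤ 1 * ‖u‖ ^ α := by
          gcongr
          exact PiLp.norm_apply_le u k
      _ = ‖u‖ ^ α := one_mul _
  calc ‖Gam d α u‖ = √(∑ k, ‖Gam d α u k‖ ^ 2) := EuclideanSpace.norm_eq _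
    _ ≤ √(∑ _k : Fin d, (‖u‖ ^ α) ^ 2) := by gcongr with k; exact hk k
    _ = √d * ‖u‖ ^ α := by
        rw [Finset.sum_const, Finset.card_univ, Fintype.card_fin, nsmul_eq_mul,
          Real.sqrt_mul (Nat.cast_nonneg d), Real.sqrt_sq (by positivity)]

lemma norm_smul_Gam_sub_le {ι : Type*} {ψ : ℝ → ℝ} {Ψ C : ℝ} (hα : 0 ≤ α)
    (hψ : ∀ r, 0 ≤ r → |ψ r| ≤ Ψ) {x v : ι → EuclideanSpace ℝ (Fin d)} (hv : ∀ i, ‖v i‖ ≤ C)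
    (i j : ι) : ‖ψ ‖x j - x i‖ • Gam d α (v j - v i)‖ ≤ Ψ * (√d * (2 * C) ^ α) := by
  have hΨ : 0 ≤ Ψ := (abs_nonneg _).trans (hψ 0 le_rfl)
  have hvji : ‖v j - v i‖ ≤ 2 * C := by linarith [norm_sub_le (v j) (v i), hv i, hv j]
  rw [norm_smul, Real.norm_eq_abs]
  calc |ψ ‖x j - x i‖| * ‖Gam d α (v j - v i)‖ ≤ Ψ * (√d * ‖v j - v i‖ ^ α) :=
        mul_le_mul (hψ _ (norm_nonneg _)) (norm_Gam_le hα _) (norm_nonneg _) hΨ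
    _ ≤ Ψ * (√d * (2 * C) ^ α) := by gcongr

variable {κ : ℝ} {m : ℕ → ℝ} {ψ : ℝ → ℝ} {x v : ℕ → ℝ → EuclideanSpace ℝ (Fin d)}

lemma icsRHS_eq_smul_tsum_smul (i : ℕ) (t : ℝ) :
    icsRHS d κ α m ψ x v i t = κ • ∑' j, m j • ψ ‖x j t - x i t‖ • Gam d α (v j t - v i t) := by
  simp only [icsRHS, mul_smul]

variable {Ψ C t : ℝ}

lemma norm_icsRHS_le (hα : 0 ≤ α) (hm0 : ∀ j, 0 ≤ m j) (hm : Summable m)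
    (hψ : ∀ r, 0 ≤ r → |ψ r| ≤ Ψ) (hv : ∀ j, ‖v j t‖ ≤ C) (i : ℕ) :
    ‖icsRHS d κ α m ψ x v i t‖ ≤ ‖κ‖ * ((∑' j, m j) * (Ψ * (√d * (2 * C) ^ α))) := by
  have hF := norm_smul_Gam_sub_le (x := (x · t)) (v := (v · t)) hα hψ hv i
  rw [icsRHS_eq_smul_tsum_smul, norm_smul]
  exact mul_le_mul_of_nonneg_left (norm_tsum_smul_le hm0 hm hF) (norm_nonneg κ)

lemma tsum_smul_icsRHS_eq_zero (hα : 0 ≤ α) (hm0 : ∀ j, 0 ≤ m j) (hm : Summable m)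
    (hψ : ∀ r, 0 ≤ r → |ψ r| ≤ Ψ) (hv : ∀ j, ‖v j t‖ ≤ C) :
    ∑' i, m i • icsRHS d κ α m ψ x v i t = 0 := by
  have hF := norm_smul_Gam_sub_le (x := (x · t)) (v := (v · t)) hα hψ hv
  simp only [icsRHS_eq_smul_tsum_smul, smul_comm (m _) κ]
  rw [tsum_const_smul'', tsum_smul_tsum_smul_eq_zero_of_antisymm hm0 hm hF fun i j => ?_,
    smul_zero]
  rw [norm_sub_rev, show v i t - v j t = -(v j t - v i t) from (neg_sub _ _).symm, Gam_neg,
    smul_neg]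

end CuckerSmale

theorem stmt3_general (d : ℕ) (κ : ℝ) (α : ℝ) (hα0 : 0 < α)
    (m : ℕ → ℝ) (hm0 : ∀ j, 0 ≤ m j) (hmS : Summable m)
    (ψ : ℝ → ℝ) (hψanti : AntitoneOn ψ (Set.Ici 0))
    (hψnn : ∀ r, 0 ≤ r → 0 ≤ ψ r)
    (x v : ℕ → ℝ → EuclideanSpace ℝ (Fin d))
    (hsol : IsICSSolOn d κ α m ψ x v (Set.Ici 0) (Set.Ioi 0)) :
    ∀ t : ℝ, 0 ≤ t → ∑' i, m i • v i t = ∑' i, m i • v i 0 := by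
  intro t ht
  obtain ⟨hbdd, -, hvcont, hode⟩ := hsol
  obtain ⟨C, hC⟩ := hbdd (Icc 0 t) (fun s hs => hs.1) isCompact_Icc
  have hv : ∀ i, ∀ s ∈ Icc 0 t, ‖v i s‖ ≤ C := fun i s hs => by
    linarith [hC i s hs, norm_nonneg (x i s)]
  have hψ : ∀ r, 0 ≤ r → |ψ r| ≤ ψ 0 := fun r hr => by
    rw [abs_of_nonneg (hψnn r hr)]
    exact hψanti self_mem_Ici hr hr
  exact tsum_smul_eq_of_tsum_smul_deriv_eq_zero hm0 hmS ht
    (fun i => (hvcont i).mono Icc_subset_Ici_self) hv (fun i s hs => (hode i s hs.1).2.2)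
    (fun i s hs => norm_icsRHS_le hα0.le hm0 hmS hψ (fun j => hv j s (Ioo_subset_Icc_self hs)) i)
    (fun s hs => tsum_smul_icsRHS_eq_zero hα0.le hm0 hmS hψ
      fun j => hv j s (Ioo_subset_Icc_self hs))

/-- Conservation of the mass-weighted mean velocity
`v_c(t) = ∑_i m_i v_i(t)` along the ICS dynamics. -/
theorem stmt3 (d : ℕ) (hd : 1 ≤ d) (κ : ℝ) (hκ : 0 < κ) (α : ℝ) (hα0 : 0 < α) (hα1 : α < 1)
    (m : ℕ → ℝ) (hm0 : ∀ j, 0 ≤ m j) (hmS : Summable m) (hm1 : ∑' j, m j = 1)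
    (ψ : ℝ → ℝ) (hψLip : ∃ L : NNReal, LipschitzOnWith L ψ (Set.Ici 0))
    (hψanti : AntitoneOn ψ (Set.Ici 0)) (hψ0 : ψ 0 = 1)
    (hψnn : ∀ r, 0 ≤ r → 0 ≤ ψ r)
    (x v : ℕ → ℝ → EuclideanSpace ℝ (Fin d))
    (hsol : IsICSSolOn d κ α m ψ x v (Set.Ici 0) (Set.Ioi 0))
    (hinit : ∃ C : ℝ, ∀ i, ‖x i 0‖ + ‖v i 0‖ ≤ C) :
    ∀ t : ℝ, 0 ≤ t → ∑' i, m i • v i t = ∑' i, m i • v i 0 :=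
  stmt3_general d κ α hα0 m hm0 hmS ψ hψanti hψnn x v hsol
end
end

section
/- Monotonicity of the component velocity diameters: let T ∈ (0,∞) and let (x, v) be a solution of the ICS system on [0,T] with sup_i(‖x_i(0)‖ + ‖v_i(0)‖) < ∞. Then for each k ∈ {1,…,d}, the component velocity diameter t ↦ D_v^(k)(t) = M^(k)(t) − m^(k)(t) = sup_{i,j≥1}|v_i^k(t) − v_j^k(t)| is non-increasing on [0,T]. -/
/-!
Each velocity component is dragged towards the others: since `0 ≤ ψ ≤ 1`, the weights sum to `1`
and `r ↦ sign r |r|^α` is monotone, `v̇ᵢᵏ ≤ κ (Mᵏ - vᵢᵏ)^α` and `v̇ᵢᵏ ≥ -κ (vᵢᵏ - mᵏ)^α`.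
In particular all components are Lipschitz with a common constant `L`. Pick `i` almost
maximal and `j` almost minimal at time `t'`; on `[t, t']` they stay within `O(t' - t)` of the
extremes, so `vᵢᵏ - vⱼᵏ` gains at most `O((t' - t)^(1+α))` there. Hence
`D(t') - D(t) ≤ K (t' - t)^(1+α)`, and a function with superlinear increments is non-increasing.
-/

open Filter MeasureTheory
open scoped Topology

noncomputable section

open Set

theorem antitoneOn_of_sub_le_mul_rpow {f : ℝ → ℝ} {s : Set ℝ} (hs : s.OrdConnected) {C p : ℝ}
    (hp : 1 < p) (hf : ∀ t ∈ s, ∀ t' ∈ s, t ≤ t' → f t' - f t ≤ C * (t' - t) ^ p) :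
    AntitoneOn f s := by
  intro a ha b hb hab
  -- cutting `[a, b]` into `n` equal pieces bounds `f b - f a` by `n` times `C ((b - a) / n) ^ p`
  have hsplit : ∀ n : ℕ, 0 < n → f b - f a ≤ C * (b - a) ^ p * (n : ℝ) ^ (1 - p) := by
    intro n hn
    have hn' : (0 : ℝ) < n := Nat.cast_pos.2 hn
    set δ := (b - a) / n with hδ
    have hδ0 : 0 ≤ δ := div_nonneg (sub_nonneg.2 hab) hn'.le
    have hmem : ∀ j : ℕ, j ≤ n → a + j * δ ∈ s := fun j hj => hs.out ha hb
      ⟨by nlinarith, by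
        have : (j : ℝ) * δ ≤ n * δ := mul_le_mul_of_nonneg_right (by exact_mod_cast hj) hδ0
        rw [hδ, mul_div_cancel₀ _ hn'.ne'] at this; linarith⟩
    have hstep : ∀ j : ℕ, j ≤ n → f (a + j * δ) - f a ≤ j * (C * δ ^ p) := by
      intro j hj
      induction j with
      | zero => simp
      | succ j ih =>
        have := hf _ (hmem j (by omega)) _ (hmem (j + 1) hj) (by push_cast; nlinarith)
        have hlen : a + ((j + 1 : ℕ) : ℝ) * δ - (a + j * δ) = δ := by push_cast; ring
        rw [hlen] at this
        push_cast at this ⊢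
        linarith [ih (by omega)]
    have hend := hstep n le_rfl
    rw [hδ, mul_div_cancel₀ _ hn'.ne', add_sub_cancel, Real.div_rpow (sub_nonneg.2 hab) hn'.le]
      at hend
    convert hend using 1
    rw [Real.rpow_sub hn', Real.rpow_one]
    ring
  have hlim : Tendsto (fun n : ℕ => C * (b - a) ^ p * (n : ℝ) ^ (1 - p)) atTop (𝓝 0) := by
    have := (tendsto_rpow_neg_atTop (sub_pos.2 hp)).comp tendsto_natCast_atTop_atTop
    simpa [neg_sub] using this.const_mul (C * (b - a) ^ p)
  have := ge_of_tendsto hlim ((eventually_gt_atTop 0).mono hsplit)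
  linarith

theorem sub_le_mul_sub_of_hasDerivAt_le {f f' : ℝ → ℝ} {a b B : ℝ} (hab : a ≤ b)
    (hf : ContinuousOn f (Icc a b)) (hf' : ∀ t ∈ Ioo a b, HasDerivAt f (f' t) t)
    (hB : ∀ t ∈ Ioo a b, f' t ≤ B) : f b - f a ≤ B * (b - a) := by
  refine (convex_Icc a b).image_sub_le_mul_sub_of_deriv_le hf (fun t ht => ?_) (fun t ht => ?_)
    a (left_mem_Icc.2 hab) b (right_mem_Icc.2 hab) hab <;> rw [interior_Icc] at ht
  · exact (hf' t ht).differentiableAt.differentiableWithinAt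
  · exact (hf' t ht).deriv ▸ hB t ht

theorem abs_sub_le_mul_sub_of_abs_deriv_le {f f' : ℝ → ℝ} {a b L : ℝ}
    (hf : ContinuousOn f (Icc a b)) (hf' : ∀ t ∈ Ioo a b, HasDerivAt f (f' t) t)
    (hL : ∀ t ∈ Ioo a b, |f' t| ≤ L) {s t : ℝ} (hs : s ∈ Icc a b) (ht : t ∈ Icc a b)
    (hst : s ≤ t) : |f t - f s| ≤ L * (t - s) := by
  have hIcc : Icc s t ⊆ Icc a b := Icc_subset_Icc hs.1 ht.2
  have hIoo : Ioo s t ⊆ Ioo a b := Ioo_subset_Ioo hs.1 ht.2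
  have hup := sub_le_mul_sub_of_hasDerivAt_le hst (hf.mono hIcc) (fun r hr => hf' r (hIoo hr))
    fun r hr => (abs_le.1 (hL r (hIoo hr))).2
  have hlow := sub_le_mul_sub_of_hasDerivAt_le hst (hf.mono hIcc).neg
    (fun r hr => (hf' r (hIoo hr)).neg) fun r hr => neg_le.1 (abs_le.1 (hL r (hIoo hr))).1
  simp only [Pi.neg_apply] at hlow
  exact abs_le.2 ⟨by linarith, hup⟩

theorem sub_le_ciSup_sub_ciInf_add_of_gap {ι : Type*} {u u' : ι → ℝ → ℝ} {t t' κ α G : ℝ}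
    (htt' : t ≤ t') (hκ : 0 ≤ κ) (hα : 0 ≤ α)
    (hbdd : ∀ s ∈ Icc t t', BddAbove (range fun j => u j s) ∧ BddBelow (range fun j => u j s))
    (hcont : ∀ i, ContinuousOn (u i) (Icc t t'))
    (hderiv : ∀ i, ∀ s ∈ Ioo t t', HasDerivAt (u i) (u' i s) s)
    (hup : ∀ i, ∀ s ∈ Ioo t t', u' i s ≤ κ * ((⨆ j, u j s) - u i s) ^ α)
    (hlow : ∀ i, ∀ s ∈ Ioo t t', -(κ * (u i s - ⨅ j, u j s) ^ α) ≤ u' i s) (i j : ι)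
    (hgap : ∀ s ∈ Icc t t', (⨆ l, u l s) - u i s ≤ G ∧ u j s - (⨅ l, u l s) ≤ G) :
    u i t' - u j t' ≤ (⨆ l, u l t) - (⨅ l, u l t) + 2 * κ * G ^ α * (t' - t) := by
  have hdrift : ∀ s ∈ Ioo t t', u' i s - u' j s ≤ 2 * κ * G ^ α := by
    intro s hs
    have hs' := Ioo_subset_Icc_self hs
    have hi : 0 ≤ (⨆ l, u l s) - u i s := sub_nonneg.2 (le_ciSup (hbdd s hs').1 i)
    have hj : 0 ≤ u j s - (⨅ l, u l s) := sub_nonneg.2 (ciInf_le (hbdd s hs').2 j)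
    have ri := mul_le_mul_of_nonneg_left (Real.rpow_le_rpow hi (hgap s hs').1 hα) hκ
    have rj := mul_le_mul_of_nonneg_left (Real.rpow_le_rpow hj (hgap s hs').2 hα) hκ
    linarith [hup i s hs, hlow j s hs]
  have hij := sub_le_mul_sub_of_hasDerivAt_le htt' ((hcont i).sub (hcont j))
    (fun s hs => (hderiv i s hs).sub (hderiv j s hs)) hdrift
  simp only [Pi.sub_apply] at hij
  have hbt := hbdd t (left_mem_Icc.2 htt')
  linarith [le_ciSup hbt.1 i, ciInf_le hbt.2 j]

section FamilyDiameter

variable {ι : Type*} [Nonempty ι]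

theorem ciSup_sub_le_ciSup_sub_add {f g : ι → ℝ} {L : ℝ} (hg : BddAbove (range g))
    (hfg : ∀ j, |g j - f j| ≤ L) (i : ι) : (⨆ j, f j) - f i ≤ (⨆ j, g j) - g i + 2 * L := by
  have hsup : (⨆ j, f j) ≤ (⨆ j, g j) + L :=
    ciSup_le fun j => by linarith [(abs_le.1 (hfg j)).1, le_ciSup hg j]
  linarith [(abs_le.1 (hfg i)).2]

theorem sub_ciInf_le_sub_ciInf_add {f g : ι → ℝ} {L : ℝ} (hg : BddBelow (range g))
    (hfg : ∀ j, |g j - f j| ≤ L) (i : ι) : f i - (⨅ j, f j) ≤ g i - (⨅ j, g j) + 2 * L := by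
  have hinf : (⨅ j, g j) - L ≤ ⨅ j, f j :=
    le_ciInf fun j => by linarith [(abs_le.1 (hfg j)).2, ciInf_le hg j]
  linarith [(abs_le.1 (hfg i)).1]

theorem ciSup_sub_ciInf_eq_ciSup_abs_sub {f : ι → ℝ} (hA : BddAbove (range f))
    (hB : BddBelow (range f)) :
    (⨆ i, f i) - (⨅ i, f i) = ⨆ p : ι × ι, |f p.1 - f p.2| := by
  have hbdd : BddAbove (range fun p : ι × ι => |f p.1 - f p.2|) := by
    obtain ⟨M, hM⟩ := hA
    obtain ⟨μ, hμ⟩ := hB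
    refine ⟨M - μ, forall_mem_range.2 fun p => abs_sub_le_iff.2 ⟨?_, ?_⟩⟩ <;>
      linarith [hM (mem_range_self p.1), hM (mem_range_self p.2), hμ (mem_range_self p.1),
        hμ (mem_range_self p.2)]
  refine le_antisymm ?_ (ciSup_le fun p => abs_sub_le_iff.2 ⟨?_, ?_⟩)
  · rw [sub_le_iff_le_add]
    refine ciSup_le fun i => ?_
    rw [← sub_le_iff_le_add']
    exact le_ciInf fun j => by
      linarith [le_abs_self (f i - f j), le_ciSup hbdd (i, j)]
  all_goals linarith [le_ciSup hA p.1, le_ciSup hA p.2, ciInf_le hB p.1, ciInf_le hB p.2]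

theorem ciSup_sub_ciInf_le_add_mul_rpow {u u' : ι → ℝ → ℝ} {t t' κ α L : ℝ} (htt' : t ≤ t')
    (hκ : 0 ≤ κ) (hα : 0 ≤ α) (hL : 0 ≤ L)
    (hbdd : ∀ s ∈ Icc t t', BddAbove (range fun j => u j s) ∧ BddBelow (range fun j => u j s))
    (hLip : ∀ i, ∀ s ∈ Icc t t', |u i t' - u i s| ≤ L * (t' - s))
    (hcont : ∀ i, ContinuousOn (u i) (Icc t t'))
    (hderiv : ∀ i, ∀ s ∈ Ioo t t', HasDerivAt (u i) (u' i s) s)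
    (hup : ∀ i, ∀ s ∈ Ioo t t', u' i s ≤ κ * ((⨆ j, u j s) - u i s) ^ α)
    (hlow : ∀ i, ∀ s ∈ Ioo t t', -(κ * (u i s - ⨅ j, u j s) ^ α) ≤ u' i s) :
    (⨆ j, u j t') - (⨅ j, u j t') ≤
      (⨆ j, u j t) - (⨅ j, u j t) + 2 * κ * (1 + 2 * L) ^ α * (t' - t) ^ (α + 1) := by
  rcases htt'.eq_or_lt with rfl | hlt
  · simp [Real.zero_rpow (by linarith : α + 1 ≠ 0)]
  set h := t' - t
  have hh : 0 < h := sub_pos.2 hlt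
  -- `i` and `j` are `η`-almost extremal at `t'`; Lipschitz continuity keeps them so on `[t, t']`
  have hη : ∀ η, 0 < η → η ≤ h → (⨆ j, u j t') - (⨅ j, u j t') ≤
      (⨆ j, u j t) - (⨅ j, u j t) + 2 * η + 2 * κ * ((1 + 2 * L) * h) ^ α * h := by
    intro η hη hηh
    obtain ⟨i, hi⟩ := exists_lt_of_lt_ciSup (sub_lt_self (⨆ j, u j t') hη)
    obtain ⟨j, hj⟩ := exists_lt_of_ciInf_lt (lt_add_of_pos_right (⨅ j, u j t') hη)
    have hbt' := hbdd t' (right_mem_Icc.2 htt')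
    have := sub_le_ciSup_sub_ciInf_add_of_gap (G := (1 + 2 * L) * h) htt' hκ hα hbdd hcont hderiv
      hup hlow i j
      fun s hs => by
        have hLs : L * (t' - s) ≤ L * h := mul_le_mul_of_nonneg_left (by linarith [hs.1]) hL
        have hi' := ciSup_sub_le_ciSup_sub_add hbt'.1 (fun l => hLip l s hs) i
        have hj' := sub_ciInf_le_sub_ciInf_add hbt'.2 (fun l => hLip l s hs) j
        constructor <;> nlinarith
    linarith
  have hlim : (⨆ j, u j t') - (⨅ j, u j t') ≤
      (⨆ j, u j t) - (⨅ j, u j t) + 2 * κ * ((1 + 2 * L) * h) ^ α * h := by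
    refine le_of_forall_pos_le_add fun ε hε => ?_
    have := hη (min (ε / 2) h) (lt_min (half_pos hε) hh) (min_le_right _ _)
    linarith [min_le_left (ε / 2) h]
  convert hlim using 2
  rw [Real.mul_rpow (by linarith) hh.le, Real.rpow_add_one' hh.le (by linarith)]
  ring

theorem antitoneOn_ciSup_sub_ciInf {u u' : ι → ℝ → ℝ} {a b κ α C : ℝ} (hκ : 0 ≤ κ) (hα : 0 < α)
    (hC : ∀ i, ∀ t ∈ Icc a b, |u i t| ≤ C)
    (hcont : ∀ i, ContinuousOn (u i) (Icc a b))
    (hderiv : ∀ i, ∀ t ∈ Ioo a b, HasDerivAt (u i) (u' i t) t)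
    (hup : ∀ i, ∀ t ∈ Ioo a b, ∀ M, (∀ j, u j t ≤ M) → u' i t ≤ κ * (M - u i t) ^ α)
    (hlow : ∀ i, ∀ t ∈ Ioo a b, ∀ μ, (∀ j, μ ≤ u j t) → -(κ * (u i t - μ) ^ α) ≤ u' i t) :
    AntitoneOn (fun t => (⨆ i, u i t) - ⨅ i, u i t) (Icc a b) := by
  set L := κ * (2 * C) ^ α
  have hbdd : ∀ t ∈ Icc a b, BddAbove (range fun j => u j t) ∧ BddBelow (range fun j => u j t) :=
    fun t ht => ⟨⟨C, forall_mem_range.2 fun j => (abs_le.1 (hC j t ht)).2⟩,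
      ⟨-C, forall_mem_range.2 fun j => (abs_le.1 (hC j t ht)).1⟩⟩
  have hspeed : ∀ i, ∀ t ∈ Ioo a b, |u' i t| ≤ L := by
    intro i t ht
    have hCi := abs_le.1 (hC i t (Ioo_subset_Icc_self ht))
    have hM := hup i t ht C fun j => (abs_le.1 (hC j t (Ioo_subset_Icc_self ht))).2
    have hμ := hlow i t ht (-C) fun j => (abs_le.1 (hC j t (Ioo_subset_Icc_self ht))).1
    have r1 := mul_le_mul_of_nonneg_left
      (Real.rpow_le_rpow (sub_nonneg.2 hCi.2) (by linarith : C - u i t ≤ 2 * C) hα.le) hκ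
    have r2 := mul_le_mul_of_nonneg_left
      (Real.rpow_le_rpow (by linarith : 0 ≤ u i t - -C) (by linarith : u i t - -C ≤ 2 * C) hα.le) hκ
    exact abs_le.2 ⟨by linarith, by linarith⟩
  have hupSup : ∀ i, ∀ t ∈ Ioo a b, u' i t ≤ κ * ((⨆ j, u j t) - u i t) ^ α := fun i t ht =>
    hup i t ht _ fun j => le_ciSup (hbdd t (Ioo_subset_Icc_self ht)).1 j
  have hlowInf : ∀ i, ∀ t ∈ Ioo a b, -(κ * (u i t - ⨅ j, u j t) ^ α) ≤ u' i t := fun i t ht =>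
    hlow i t ht _ fun j => ciInf_le (hbdd t (Ioo_subset_Icc_self ht)).2 j
  refine antitoneOn_of_sub_le_mul_rpow (C := 2 * κ * (1 + 2 * L) ^ α) ordConnected_Icc
    (by linarith : 1 < α + 1) fun t ht t' ht' htt' => ?_
  have hsub : Icc t t' ⊆ Icc a b := Icc_subset_Icc ht.1 ht'.2
  have hsub' : Ioo t t' ⊆ Ioo a b := Ioo_subset_Ioo ht.1 ht'.2
  have hC0 : 0 ≤ C := (abs_nonneg _).trans (hC (Classical.arbitrary ι) t ht)
  have := ciSup_sub_ciInf_le_add_mul_rpow htt' hκ hα.le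
    (mul_nonneg hκ (Real.rpow_nonneg (by linarith) α)) (fun s hs => hbdd s (hsub hs))
    (fun i s hs => abs_sub_le_mul_sub_of_abs_deriv_le (hcont i) (hderiv i) (hspeed i)
      (hsub hs) ht' hs.2)
    (fun i => (hcont i).mono hsub) (fun i s hs => hderiv i s (hsub' hs))
    (fun i s hs => hupSup i s (hsub' hs)) (fun i s hs => hlowInf i s (hsub' hs))
  linarith

end FamilyDiameter

def signRpow (α r : ℝ) : ℝ := Real.sign r * |r| ^ α

theorem signRpow_neg (α r : ℝ) : signRpow α (-r) = -signRpow α r := by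
  simp [signRpow, Real.sign_neg]

theorem signRpow_le_rpow {α r b : ℝ} (hα : 0 ≤ α) (hrb : r ≤ b) (hb : 0 ≤ b) :
    signRpow α r ≤ b ^ α := by
  rcases lt_trichotomy r 0 with h | rfl | h
  · rw [signRpow, Real.sign_of_neg h]
    linarith [Real.rpow_nonneg (abs_nonneg r) α, Real.rpow_nonneg hb α]
  · simp [signRpow, Real.rpow_nonneg hb α]
  · rw [signRpow, Real.sign_of_pos h, one_mul, abs_of_pos h]
    exact Real.rpow_le_rpow h.le hrb hα

theorem Gam_apply (d : ℕ) (α : ℝ) (u : EuclideanSpace ℝ (Fin d)) (k : Fin d) :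
    Gam d α u k = signRpow α (u k) := rfl

section WeightedSignRpow

variable {ι : Type*} {m c a : ι → ℝ} {α b S W : ℝ}

theorem le_rpow_of_hasSum_mul_signRpow {M : ℝ} (hα : 0 ≤ α) (hm0 : ∀ j, 0 ≤ m j)
    (hm : HasSum m W) (hc : ∀ j, c j ∈ Icc (0 : ℝ) 1)
    (hS : HasSum (fun j => m j * c j * signRpow α (a j - b)) S) (ha : ∀ j, a j ≤ M)
    (hb : b ≤ M) : S ≤ W * (M - b) ^ α := by
  refine hasSum_le (fun j => ?_) hS (hm.mul_right _)
  have hsign := signRpow_le_rpow hα (sub_le_sub_right (ha j) b) (sub_nonneg.2 hb)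
  have hpow := Real.rpow_nonneg (sub_nonneg.2 hb) α
  rw [mul_assoc]
  refine mul_le_mul_of_nonneg_left ?_ (hm0 j)
  nlinarith [mul_nonneg (hc j).1 (sub_nonneg.2 hsign), mul_nonneg (sub_nonneg.2 (hc j).2) hpow]

theorem neg_rpow_le_of_hasSum_mul_signRpow {μ : ℝ} (hα : 0 ≤ α) (hm0 : ∀ j, 0 ≤ m j)
    (hm : HasSum m W) (hc : ∀ j, c j ∈ Icc (0 : ℝ) 1)
    (hS : HasSum (fun j => m j * c j * signRpow α (a j - b)) S) (ha : ∀ j, μ ≤ a j)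
    (hb : μ ≤ b) : -(W * (b - μ) ^ α) ≤ S := by
  have hneg : ∀ j, m j * c j * signRpow α (-a j - -b) = -(m j * c j * signRpow α (a j - b)) :=
    fun j => by rw [show -a j - -b = -(a j - b) by ring, signRpow_neg, mul_neg]
  have hS' : HasSum (fun j => m j * c j * signRpow α (-a j - -b)) (-S) := by
    simpa only [hneg] using hS.neg
  have := le_rpow_of_hasSum_mul_signRpow hα hm0 hm hc hS' (fun j => neg_le_neg (ha j))
    (neg_le_neg hb)
  rw [show -μ - -b = b - μ by ring] at this
  linarith

end WeightedSignRpow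

section ICS

variable {d : ℕ} {κ α : ℝ} {m : ℕ → ℝ} {ψ : ℝ → ℝ} {x v : ℕ → ℝ → EuclideanSpace ℝ (Fin d)}
  {s sInt : Set ℝ}

theorem hasSum_apply_tsum_smul_Gam {i : ℕ} {t : ℝ}
    (hsum : Summable fun j => ‖(m j * ψ ‖x j t - x i t‖) • Gam d α (v j t - v i t)‖)
    (k : Fin d) :
    HasSum (fun j => m j * ψ ‖x j t - x i t‖ * signRpow α (v j t k - v i t k))
      ((∑' j, (m j * ψ ‖x j t - x i t‖) • Gam d α (v j t - v i t)) k) := by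
  simpa [Gam_apply] using hsum.of_norm.hasSum.mapL (EuclideanSpace.proj (𝕜 := ℝ) k)

theorem icsRHS_apply (i : ℕ) (t : ℝ) (k : Fin d) :
    icsRHS d κ α m ψ x v i t k =
      κ * (∑' j, (m j * ψ ‖x j t - x i t‖) • Gam d α (v j t - v i t)) k := rfl

theorem IsICSSolOn.exists_abs_apply_le {a b : ℝ}
    (hsol : IsICSSolOn d κ α m ψ x v (Icc a b) sInt) (k : Fin d) :
    ∃ C, ∀ i, ∀ t ∈ Icc a b, |v i t k| ≤ C := by
  obtain ⟨C, hC⟩ := hsol.1 (Icc a b) subset_rfl isCompact_Icc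
  exact ⟨C, fun i t ht => (PiLp.norm_apply_le (v i t) k).trans
    ((le_add_of_nonneg_left (norm_nonneg _)).trans (hC i t ht))⟩

theorem IsICSSolOn.continuousOn_apply (hsol : IsICSSolOn d κ α m ψ x v s sInt) (i : ℕ)
    (k : Fin d) : ContinuousOn (fun t => v i t k) s :=
  (EuclideanSpace.proj (𝕜 := ℝ) k).continuous.comp_continuousOn (hsol.2.2.1 i)

theorem IsICSSolOn.hasDerivAt_apply (hsol : IsICSSolOn d κ α m ψ x v s sInt) {i : ℕ} {t : ℝ}
    (ht : t ∈ sInt) (k : Fin d) :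
    HasDerivAt (fun τ => v i τ k) (icsRHS d κ α m ψ x v i t k) t :=
  (EuclideanSpace.proj (𝕜 := ℝ) k).hasFDerivAt.comp_hasDerivAt t (hsol.2.2.2 i t ht).2.2

theorem IsICSSolOn.icsRHS_apply_le (hsol : IsICSSolOn d κ α m ψ x v s sInt) (hκ : 0 ≤ κ)
    (hα : 0 ≤ α) (hm0 : ∀ j, 0 ≤ m j) (hm : HasSum m 1) (hψ : ∀ r, 0 ≤ r → ψ r ∈ Icc (0 : ℝ) 1)
    {i : ℕ} {t : ℝ} (ht : t ∈ sInt) (k : Fin d) {M : ℝ} (hM : ∀ j, v j t k ≤ M) :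
    icsRHS d κ α m ψ x v i t k ≤ κ * (M - v i t k) ^ α := by
  have := le_rpow_of_hasSum_mul_signRpow hα hm0 hm (fun j => hψ _ (norm_nonneg _))
    (hasSum_apply_tsum_smul_Gam (hsol.2.2.2 i t ht).2.1 k) hM (hM i)
  rw [icsRHS_apply]
  exact mul_le_mul_of_nonneg_left (by rwa [one_mul] at this) hκ

theorem IsICSSolOn.neg_rpow_le_icsRHS_apply (hsol : IsICSSolOn d κ α m ψ x v s sInt)
    (hκ : 0 ≤ κ) (hα : 0 ≤ α) (hm0 : ∀ j, 0 ≤ m j) (hm : HasSum m 1)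
    (hψ : ∀ r, 0 ≤ r → ψ r ∈ Icc (0 : ℝ) 1) {i : ℕ} {t : ℝ} (ht : t ∈ sInt) (k : Fin d) {μ : ℝ}
    (hμ : ∀ j, μ ≤ v j t k) :
    -(κ * (v i t k - μ) ^ α) ≤ icsRHS d κ α m ψ x v i t k := by
  have := neg_rpow_le_of_hasSum_mul_signRpow hα hm0 hm (fun j => hψ _ (norm_nonneg _))
    (hasSum_apply_tsum_smul_Gam (hsol.2.2.2 i t ht).2.1 k) hμ (hμ i)
  rw [icsRHS_apply, ← mul_neg]
  exact mul_le_mul_of_nonneg_left (by rwa [one_mul] at this) hκ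

end ICS

theorem stmt6_general (d : ℕ) (κ : ℝ) (hκ : 0 < κ) (α : ℝ) (hα0 : 0 < α)
    (m : ℕ → ℝ) (hm0 : ∀ j, 0 ≤ m j) (hmS : Summable m) (hm1 : ∑' j, m j = 1)
    (ψ : ℝ → ℝ)
    (hψanti : AntitoneOn ψ (Set.Ici 0)) (hψ0 : ψ 0 = 1)
    (hψnn : ∀ r, 0 ≤ r → 0 ≤ ψ r)
    (T : ℝ)
    (x v : ℕ → ℝ → EuclideanSpace ℝ (Fin d))
    (hsol : IsICSSolOn d κ α m ψ x v (Set.Icc 0 T) (Set.Ioo 0 T))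
    (k : Fin d) :
    AntitoneOn (Dv d v k) (Set.Icc 0 T) ∧
    ∀ t ∈ Set.Icc (0:ℝ) T, Dv d v k t = ⨆ p : ℕ × ℕ, |v p.1 t k - v p.2 t k| := by
  have hm : HasSum m 1 := hm1 ▸ hmS.hasSum
  have hψ : ∀ r, 0 ≤ r → ψ r ∈ Icc (0 : ℝ) 1 := fun r hr =>
    ⟨hψnn r hr, hψ0 ▸ hψanti self_mem_Ici hr hr⟩
  obtain ⟨C, hC⟩ := hsol.exists_abs_apply_le k
  refine ⟨antitoneOn_ciSup_sub_ciInf hκ.le hα0 hC (fun i => hsol.continuousOn_apply i k)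
      (fun i t ht => hsol.hasDerivAt_apply ht k)
      (fun i t ht M hM => hsol.icsRHS_apply_le hκ.le hα0.le hm0 hm hψ ht k hM)
      (fun i t ht μ hμ => hsol.neg_rpow_le_icsRHS_apply hκ.le hα0.le hm0 hm hψ ht k hμ),
    fun t ht => ciSup_sub_ciInf_eq_ciSup_abs_sub
      ⟨C, forall_mem_range.2 fun i => (abs_le.1 (hC i t ht)).2⟩
      ⟨-C, forall_mem_range.2 fun i => (abs_le.1 (hC i t ht)).1⟩⟩

/-- The component velocity diameter
`D_v^(k)(t) = M^(k)(t) − m^(k)(t)` is non-increasing on `[0,T]`. -/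
theorem stmt6 (d : ℕ) (hd : 1 ≤ d) (κ : ℝ) (hκ : 0 < κ) (α : ℝ) (hα0 : 0 < α) (hα1 : α < 1)
    (m : ℕ → ℝ) (hm0 : ∀ j, 0 ≤ m j) (hmS : Summable m) (hm1 : ∑' j, m j = 1)
    (ψ : ℝ → ℝ) (hψLip : ∃ L : NNReal, LipschitzOnWith L ψ (Set.Ici 0))
    (hψanti : AntitoneOn ψ (Set.Ici 0)) (hψ0 : ψ 0 = 1)
    (hψnn : ∀ r, 0 ≤ r → 0 ≤ ψ r)
    (T : ℝ) (hT : 0 < T)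
    (x v : ℕ → ℝ → EuclideanSpace ℝ (Fin d))
    (hsol : IsICSSolOn d κ α m ψ x v (Set.Icc 0 T) (Set.Ioo 0 T))
    (hinit : ∃ C : ℝ, ∀ i, ‖x i 0‖ + ‖v i 0‖ ≤ C)
    (k : Fin d) :
    AntitoneOn (Dv d v k) (Set.Icc 0 T) ∧
    ∀ t ∈ Set.Icc (0:ℝ) T, Dv d v k t = ⨆ p : ℕ × ℕ, |v p.1 t k - v p.2 t k| :=
  stmt6_general d κ hκ α hα0 m hm0 hmS hm1 ψ hψanti hψ0 hψnn T x v hsol k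
end
end
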